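/- arXiv:1901.03725 — 2 statements merged into one kernel-verified Lean document; each statement's English description precedes it below -/
import Mathlib

section
/- Let L_1, L_2, L_3 ⊆ ℂ^4 be 2-dimensional linear subspaces (lines in P^3) which are pairwise disjoint, i.e. L_i ∩ L_j = {0} for i ≠ j. Then the ℂ-vector space of homogeneous polynomials of degree 2 in ℂ[x_0,x_1,x_2,x_3] vanishing identically on L_1, L_2 and L_3 has dimension exactly 1; that is, there is a unique quadric surface through three pairwise skew lines. -/
/-!
Two skew lines `L₀, L₁` give `ℂ⁴ = L₀ ⊕ L₁`, and a third line `L₂` skew to both projects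
isomorphically onto each summand. Projecting a basis `u, w` of `L₂` to `L₀` and to `L₁` therefore
gives a basis `p u, p w, q u, q w` of `ℂ⁴` in which `L₂` is spanned by `e₀ + e₂` and `e₁ + e₃`:
any three skew lines are carried by a linear automorphism to the standard ones
`⟨e₀, e₁⟩, ⟨e₂, e₃⟩, ⟨e₀ + e₂, e₁ + e₃⟩`. A change of coordinates does not change the dimension
of the space of quadrics through the lines, and for the standard lines a quadric `∑ cᵢⱼ xᵢ xⱼ`
vanishing at `e₀, e₁, e₀ + e₁, e₂, e₃, e₂ + e₃, e₀ + e₂, e₁ + e₃, e₀ + e₁ + e₂ + e₃` is a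
multiple of `x₀ x₃ - x₁ x₂`, which does vanish on the three lines.
-/

open MvPolynomial

noncomputable section

abbrev C4 : Type := Fin 4 → ℂ
abbrev R3 : Type := MvPolynomial (Fin 4) ℂ

/-- The homogeneous ideal of the line in `P^3` corresponding to a linear subspace
`L ⊆ ℂ^4`: all polynomials vanishing identically on `L`. -/
def lineIdeal (L : Submodule ℂ C4) : Ideal R3 where
  carrier := {F | ∀ v ∈ L, eval v F = 0}
  add_mem' := by
    intro a b ha hb v hv
    simp [ha v hv, hb v hv]
  zero_mem' := by
    intro v hv
    simp
  smul_mem' := by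
    intro c F hF v hv
    simp [smul_eq_mul, hF v hv]


namespace MvPolynomial

variable {σ K : Type*} [Fintype σ] [DecidableEq σ]

section CommSemiring

variable [CommSemiring K]

def linearSubst (g : (σ → K) →ₗ[K] σ → K) : MvPolynomial σ K →ₐ[K] MvPolynomial σ K :=
  aeval fun i => ∑ j, C (g (Pi.single j 1) i) * X j

@[simp]
theorem eval_linearSubst (g : (σ → K) →ₗ[K] σ → K) (F : MvPolynomial σ K) (v : σ → K) :
    eval v (linearSubst g F) = eval (g v) F := by
  rw [← aeval_eq_eval, ← aeval_eq_eval, linearSubst, comp_aeval_apply]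
  congr 2
  ext i
  conv_rhs => rw [pi_eq_sum_univ' v]
  simp [Finset.sum_apply, mul_comm]

theorem IsHomogeneous.linearSubst {F : MvPolynomial σ K} {n : ℕ} (hF : F.IsHomogeneous n)
    (g : (σ → K) →ₗ[K] σ → K) : (linearSubst g F).IsHomogeneous n := by
  rw [MvPolynomial.linearSubst, ← one_mul n]
  exact hF.aeval _
    fun i => IsHomogeneous.sum _ _ _ fun j _ => (isHomogeneous_X K j).C_mul _

end CommSemiring

variable [Field K] [Infinite K]

def linearSubstEquiv (G : (σ → K) ≃ₗ[K] σ → K) : MvPolynomial σ K ≃ₐ[K] MvPolynomial σ K :=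
  AlgEquiv.ofAlgHom (linearSubst G.toLinearMap) (linearSubst G.symm.toLinearMap)
    (AlgHom.ext fun F => funext fun v => by simp)
    (AlgHom.ext fun F => funext fun v => by simp)

@[simp]
theorem eval_linearSubstEquiv (G : (σ → K) ≃ₗ[K] σ → K) (F : MvPolynomial σ K) (v : σ → K) :
    eval v (linearSubstEquiv G F) = eval (G v) F :=
  eval_linearSubst _ F v

theorem isHomogeneous_linearSubstEquiv_iff (G : (σ → K) ≃ₗ[K] σ → K) {F : MvPolynomial σ K}
    {n : ℕ} : (linearSubstEquiv G F).IsHomogeneous n ↔ F.IsHomogeneous n :=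
  ⟨fun h => (linearSubstEquiv G).symm_apply_apply F ▸ h.linearSubst G.symm.toLinearMap,
    fun h => h.linearSubst _⟩

end MvPolynomial

theorem Finsupp.exists_eq_single_add_single_of_degree_eq_two {σ : Type*} {d : σ →₀ ℕ}
    (h : d.degree = 2) : ∃ i j, d = single i 1 + single j 1 := by
  classical
  obtain ⟨i, j, hij⟩ := Multiset.card_eq_two.1 (by rwa [Finsupp.card_toMultiset])
  refine ⟨i, j, ?_⟩
  rw [← Finsupp.toMultiset_toFinsupp d, hij, Multiset.insert_eq_cons, ← Multiset.singleton_add,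
    Multiset.toFinsupp_add, Multiset.toFinsupp_singleton, Multiset.toFinsupp_singleton]

theorem MvPolynomial.IsHomogeneous.mem_span_X_mul_X {σ R : Type*} [CommSemiring R]
    {q : MvPolynomial σ R} (hq : q.IsHomogeneous 2) :
    q ∈ Submodule.span R (Set.range fun p : σ × σ => X p.1 * X p.2) := by
  rw [q.as_sum]
  refine Submodule.sum_mem _ fun d hd => ?_
  obtain ⟨i, j, rfl⟩ := Finsupp.exists_eq_single_add_single_of_degree_eq_two
    (not_not.1 fun h => mem_support_iff.mp hd (hq.coeff_eq_zero h))
  rw [← mul_one (coeff _ q), ← smul_eq_mul, ← smul_monomial]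
  exact Submodule.smul_mem _ _ (Submodule.subset_span ⟨(i, j), by simp [X, monomial_mul]⟩)

section SkewLines

open Module Submodule

variable {K V : Type*} [Field K] [AddCommGroup V] [Module K V]

theorem Submodule.exists_span_pair_eq_of_finrank_eq_two {W : Submodule K V}
    (h : finrank K W = 2) : ∃ u w : V, span K {u, w} = W := by
  have := Module.finite_of_finrank_eq_succ h
  let b := finBasisOfFinrankEq K W h
  refine ⟨b 0, b 1, ?_⟩
  conv_rhs => rw [← W.map_subtype_top, ← b.span_eq, map_span, ← Set.range_comp]
  congr 1
  ext
  simp [Fin.exists_fin_two, eq_comm]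

theorem Submodule.map_projection_of_disjoint [FiniteDimensional K V] {P Q W : Submodule K V}
    (h : IsCompl P Q) (hWQ : Disjoint W Q) (hdim : finrank K W = finrank K P) :
    W.map (P.projection Q h) = P := by
  refine eq_of_le_of_finrank_eq (LinearMap.map_le_range.trans (range_projection h).le) ?_
  rw [← LinearMap.range_domRestrict, LinearMap.finrank_range_of_inj, hdim]
  rwa [LinearMap.injective_domRestrict_iff, ker_projection]

def standardSkewLines (K : Type*) [Field K] : Fin 3 → Submodule K (Fin 4 → K) :=
  ![span K {Pi.single 0 1, Pi.single 1 1}, span K {Pi.single 2 1, Pi.single 3 1},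
    span K {Pi.single 0 1 + Pi.single 2 1, Pi.single 1 1 + Pi.single 3 1}]

theorem exists_linearEquiv_map_standardSkewLines (hV : finrank K V = 4)
    (L : Fin 3 → Submodule K V) (hdim : ∀ i, finrank K (L i) = 2)
    (hskew : ∀ i j, i ≠ j → L i ⊓ L j = ⊥) :
    ∃ G : (Fin 4 → K) ≃ₗ[K] V, ∀ i, (standardSkewLines K i).map G.toLinearMap = L i := by
  have : FiniteDimensional K V := Module.finite_of_finrank_eq_succ hV
  have hc : IsCompl (L 0) (L 1) := (isCompl_iff_disjoint _ _ (by simp [hV, hdim])).2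
    (disjoint_iff.2 (hskew 0 1 (by decide)))
  obtain ⟨u, w, huw⟩ := exists_span_pair_eq_of_finrank_eq_two (hdim 2)
  set p := (L 0).projection (L 1) hc
  set q := (L 1).projection (L 0) hc.symm
  have hp : span K {p u, p w} = L 0 := by
    rw [← Set.image_pair, ← map_span, huw, map_projection_of_disjoint hc
      (disjoint_iff.2 (hskew 2 1 (by decide))) (by rw [hdim, hdim])]
  have hq : span K {q u, q w} = L 1 := by
    rw [← Set.image_pair, ← map_span, huw, map_projection_of_disjoint hc.symm
      (disjoint_iff.2 (hskew 2 0 (by decide))) (by rw [hdim, hdim])]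
  have hpq : ∀ x, p x + q x = x := projection_add_projection_eq_self hc
  let e : Fin 4 → V := ![p u, p w, q u, q w]
  have he : span K (Set.range e) = ⊤ := by
    rw [show Set.range e = {p u, p w} ∪ {q u, q w} by
      ext
      simp only [e, Matrix.range_cons, Matrix.range_empty, Set.union_empty, Set.union_singleton,
        Set.union_insert, Set.mem_insert_iff, Set.mem_singleton_iff]
      tauto,
      span_union, hp, hq, hc.sup_eq_top]
  let B := basisOfTopLeSpanOfCardEqFinrank e he.ge (by simp [hV])
  let G := (Pi.basisFun K (Fin 4)).equiv B (Equiv.refl _)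
  have hG : ∀ j, G (Pi.single j 1) = e j := fun j => by
    simp [G, B, ← Pi.basisFun_apply, Basis.equiv_apply]
  refine ⟨G, fun i => ?_⟩
  fin_cases i <;> simp [standardSkewLines, map_span, Set.image_pair, hG, e, hp, hq, hpq, huw]

end SkewLines

def formsVanishingOn {ι : Type*} (n : ℕ) (L : ι → Submodule ℂ C4) : Submodule ℂ R3 :=
  homogeneousSubmodule (Fin 4) ℂ n ⊓ ⨅ i, (lineIdeal (L i)).restrictScalars ℂ

theorem mem_formsVanishingOn {ι : Type*} {n : ℕ} {L : ι → Submodule ℂ C4} {F : R3} :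
    F ∈ formsVanishingOn n L ↔ F.IsHomogeneous n ∧ ∀ i, ∀ v ∈ L i, eval v F = 0 := by
  simp only [formsVanishingOn, Submodule.mem_inf, Submodule.mem_iInf, mem_homogeneousSubmodule]
  rfl

theorem linearSubstEquiv_mem_formsVanishingOn_iff {ι : Type*} {n : ℕ} {L : ι → Submodule ℂ C4}
    (G : C4 ≃ₗ[ℂ] C4) {F : R3} :
    linearSubstEquiv G F ∈ formsVanishingOn n L ↔
      F ∈ formsVanishingOn n fun i => (L i).map G.toLinearMap := by
  simp [mem_formsVanishingOn, isHomogeneous_linearSubstEquiv_iff, -Submodule.mem_map_equiv]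

theorem finrank_formsVanishingOn_map {ι : Type*} (n : ℕ) (L : ι → Submodule ℂ C4)
    (G : C4 ≃ₗ[ℂ] C4) :
    Module.finrank ℂ (formsVanishingOn n fun i => (L i).map G.toLinearMap) =
      Module.finrank ℂ (formsVanishingOn n L) := by
  have : (formsVanishingOn n fun i => (L i).map G.toLinearMap) =
      (formsVanishingOn n L).comap (linearSubstEquiv G).toLinearEquiv.toLinearMap := by
    ext F
    exact (linearSubstEquiv_mem_formsVanishingOn_iff G).symm
  rw [this, Submodule.comap_equiv_eq_map_symm, LinearEquiv.finrank_map_eq]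

theorem formsVanishingOn_two_standardSkewLines :
    formsVanishingOn 2 (standardSkewLines ℂ) = ℂ ∙ (X 0 * X 3 - X 1 * X 2 : R3) := by
  apply le_antisymm
  · intro q hq
    obtain ⟨hhom, hvan⟩ := mem_formsVanishingOn.1 hq
    have vanish_three : ∀ i u w, standardSkewLines ℂ i = Submodule.span ℂ {u, w} →
        eval u q = 0 ∧ eval w q = 0 ∧ eval (u + w) q = 0 := by
      intro i u w hi
      have hu : u ∈ standardSkewLines ℂ i := hi ▸ Submodule.subset_span (by simp)
      have hw : w ∈ standardSkewLines ℂ i := hi ▸ Submodule.subset_span (by simp)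
      exact ⟨hvan i u hu, hvan i w hw, hvan i _ (add_mem hu hw)⟩
    obtain ⟨E1, E2, E3⟩ := vanish_three 0 _ _ rfl
    obtain ⟨E4, E5, E6⟩ := vanish_three 1 _ _ rfl
    obtain ⟨E7, E8, E9⟩ := vanish_three 2 _ _ rfl
    obtain ⟨c, rfl⟩ := (Submodule.mem_span_range_iff_exists_fun ℂ).1 hhom.mem_span_X_mul_X
    simp only [Fin.isValue, Fintype.sum_prod_type, Fin.sum_univ_four, map_add, smul_eval, map_mul,
      eval_X, Pi.add_apply, Pi.single_eq_same, Pi.single_eq_of_ne, ne_eq, Fin.reduceEq,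
      one_ne_zero, zero_ne_one, not_false_eq_true, mul_one, mul_zero, add_zero, zero_add]
      at E1 E2 E3 E4 E5 E6 E7 E8 E9
    refine Submodule.mem_span_singleton.2 ⟨c (0, 3) + c (3, 0), funext fun v => ?_⟩
    simp only [smul_eval, map_sub, map_mul, eval_X, Fintype.sum_prod_type, Fin.sum_univ_four,
      map_add]
    -- The nine values force `cᵢᵢ = 0`, `cᵢⱼ + cⱼᵢ = 0` for `{i, j} ≠ {0, 3}, {1, 2}`,
    -- and `c₀₃ + c₃₀ + c₁₂ + c₂₁ = 0`.
    linear_combination -(v 0 ^ 2 * E1 + v 1 ^ 2 * E2 + v 2 ^ 2 * E4 + v 3 ^ 2 * E5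
      + v 0 * v 1 * (E3 - E1 - E2) + v 2 * v 3 * (E6 - E4 - E5) + v 0 * v 2 * (E7 - E1 - E4)
      + v 1 * v 3 * (E8 - E2 - E5) + v 1 * v 2 * (E9 - E3 - E6 - E7 - E8 + E1 + E2 + E4 + E5))
  · rw [Submodule.span_le, Set.singleton_subset_iff, SetLike.mem_coe, mem_formsVanishingOn]
    refine ⟨((isHomogeneous_X ℂ 0).mul (isHomogeneous_X ℂ 3)).sub
      ((isHomogeneous_X ℂ 1).mul (isHomogeneous_X ℂ 2)), fun i v hv => ?_⟩
    fin_cases i <;>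
    · obtain ⟨a, b, rfl⟩ := Submodule.mem_span_pair.1 hv
      simp [mul_comm]

/-- There is a unique quadric through three pairwise skew lines in `P^3`:
the space of degree-2 forms vanishing on three pairwise disjoint
2-dimensional subspaces of `ℂ^4` has dimension exactly 1. -/
theorem stmt_1 (L : Fin 3 → Submodule ℂ C4)
    (hdim : ∀ i, Module.finrank ℂ ↥(L i) = 2)
    (hskew : ∀ i j, i ≠ j → L i ⊓ L j = ⊥) :
    Module.finrank ℂ
      ↥(homogeneousSubmodule (Fin 4) ℂ 2 ⊓
        ⨅ i, Submodule.restrictScalars ℂ (lineIdeal (L i))) = 1 := by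
  obtain ⟨G, hG⟩ := exists_linearEquiv_map_standardSkewLines (by simp) L hdim hskew
  change Module.finrank ℂ (formsVanishingOn 2 L) = 1
  rw [← funext hG, finrank_formsVanishingOn_map, formsVanishingOn_two_standardSkewLines,
    finrank_span_singleton]
  intro h
  simpa using congrArg (eval ![1, 0, 0, 1]) h
end
end

section
/- Let L_1, L_2, L_3, L_4 ⊆ ℂ^4 be 2-dimensional linear subspaces (lines in P^3) which are pairwise disjoint. Then there exists a nonzero homogeneous polynomial F of degree 8 in ℂ[x_0,x_1,x_2,x_3] with F ∈ I(L_i)^3 for i = 1,2,3,4; that is, 𝓛_8(3,3,3,3) is nonempty, although binom(11,3) = 165 < 184 = 4·c_{3,8}, so this system has negative virtual dimension and hence is special. -/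
/-!
Degree-2 forms on `ℂ^4` form a space of dimension `binom(5,2) = 10`, while vanishing on a line
imposes only `3` linear conditions on them (the restriction is a binary quadratic form).
Hence through any three lines passes a quadric. Let `Q_k` be a quadric through the three lines
other than `L_k`; the octic `Q_1 Q_2 Q_3 Q_4` then contains, for each `i`, three factors
vanishing on `L_i`, so it lies in `I(L_i)^3`.
-/

open MvPolynomial

noncomputable section

open Module

namespace MvPolynomial

variable {σ : Type*}

lemma finrank_homogeneousSubmodule (R : Type*) [CommRing R] [Nontrivial R] [Fintype σ] (n : ℕ) :
    finrank R (homogeneousSubmodule σ R n) = (Fintype.card σ + n - 1).choose n := by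
  classical
  rw [homogeneousSubmodule_eq_finsupp_supported, ← restrictSupport,
    finrank_eq_nat_card_basis (basisRestrictSupport R _), ← Sym.card_sym_eq_choose,
    ← Nat.card_eq_fintype_card]
  exact Nat.card_congr ((Sym.equivNatSum σ n).trans (Equiv.subtypeEquivRight fun _ => Iff.rfl)).symm

section restrictPlane

variable {R : Type*} [CommSemiring R]

def restrictPlane (u v : σ → R) : MvPolynomial σ R →ₐ[R] MvPolynomial (Fin 2) R :=
  aeval fun j => C (u j) * X 0 + C (v j) * X 1

lemma eval_restrictPlane (u v : σ → R) (x : Fin 2 → R) (p : MvPolynomial σ R) :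
    eval x (restrictPlane u v p) = eval (x 0 • u + x 1 • v) p := by
  change (aeval x).comp (aeval _) p = aeval _ p
  rw [comp_aeval]
  congr 1
  ext j
  simp [mul_comm]

lemma IsHomogeneous.restrictPlane {p : MvPolynomial σ R} {n : ℕ} (hp : p.IsHomogeneous n)
    (u v : σ → R) : (restrictPlane u v p).IsHomogeneous n := by
  have := hp.aeval _ (n := 1) fun j =>
    (isHomogeneous_C_mul_X (u j) (0 : Fin 2)).add (isHomogeneous_C_mul_X (v j) 1)
  rwa [one_mul] at this

end restrictPlane

lemma exists_isHomogeneous_forall_restrictPlane_eq_zero {K : Type*} [Field K] [Fintype σ]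
    {m d : ℕ} (u v : Fin m → σ → K) (h : m * (d + 1) < (Fintype.card σ + d - 1).choose d) :
    ∃ Q : MvPolynomial σ K, Q ≠ 0 ∧ Q.IsHomogeneous d ∧ ∀ p, restrictPlane (u p) (v p) Q = 0 := by
  let Φ : homogeneousSubmodule σ K d →ₗ[K] Fin m → homogeneousSubmodule (Fin 2) K d :=
    LinearMap.pi fun p => (restrictPlane (u p) (v p)).toLinearMap.restrict
      fun _ hQ => hQ.restrictPlane (u p) (v p)
  have : Module.Finite K (homogeneousSubmodule σ K d) :=
    Module.Finite.iff_fg.mpr (homogeneousSubmodule_fg σ K d)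
  have : Module.Finite K (homogeneousSubmodule (Fin 2) K d) :=
    Module.Finite.iff_fg.mpr (homogeneousSubmodule_fg (Fin 2) K d)
  have hker : LinearMap.ker Φ ≠ ⊥ := LinearMap.ker_ne_bot_of_finrank_lt <| by
    simpa [Module.finrank_pi_fintype, finrank_homogeneousSubmodule, add_comm 1 d] using h
  obtain ⟨⟨Q, hQ⟩, hQker, hQ0⟩ := (Submodule.ne_bot_iff _).mp hker
  refine ⟨Q, by simpa using hQ0, hQ, fun p => ?_⟩
  exact congrArg Subtype.val (congrFun (LinearMap.mem_ker.mp hQker) p)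

end MvPolynomial

lemma mem_lineIdeal_of_restrictPlane_eq_zero {L : Submodule ℂ C4} (b : Basis (Fin 2) ℂ L)
    {Q : R3} (h : restrictPlane (b 0 : C4) (b 1) Q = 0) : Q ∈ lineIdeal L := by
  intro w hw
  have hw' := congrArg Subtype.val (b.sum_repr ⟨w, hw⟩)
  simp only [Fin.sum_univ_two, Submodule.coe_add, Submodule.coe_smul] at hw'
  rw [← hw', ← eval_restrictPlane, h, map_zero]

lemma exists_quadric_mem_lineIdeal_of_ne (L : Fin 4 → Submodule ℂ C4)
    (hdim : ∀ i, finrank ℂ (L i) = 2) (k : Fin 4) :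
    ∃ Q : R3, Q ≠ 0 ∧ Q.IsHomogeneous 2 ∧ ∀ j ≠ k, Q ∈ lineIdeal (L j) := by
  let b j := Module.finBasisOfFinrankEq ℂ (L j) (hdim j)
  obtain ⟨Q, hQ0, hQ, hQL⟩ := exists_isHomogeneous_forall_restrictPlane_eq_zero (d := 2)
    (fun i => (b (k.succAbove i) 0 : C4)) (fun i => b (k.succAbove i) 1) (by decide)
  refine ⟨Q, hQ0, hQ, fun j hj => ?_⟩
  obtain ⟨i, rfl⟩ := Fin.exists_succAbove_eq hj
  exact mem_lineIdeal_of_restrictPlane_eq_zero (b _) (hQL i)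

lemma Ideal.prod_mem_pow_card_sub_one {R ι : Type*} [CommSemiring R] [Fintype ι] [DecidableEq ι]
    (I : Ideal R) {f : ι → R} (i : ι) (h : ∀ j ≠ i, f j ∈ I) :
    ∏ j, f j ∈ I ^ (Fintype.card ι - 1) := by
  rw [← Finset.mul_prod_erase _ f (Finset.mem_univ i), ← Finset.card_univ]
  refine Ideal.mul_mem_left _ _ ?_
  simpa using Ideal.prod_mem_prod (s := Finset.univ.erase i) (I := fun _ => I)
    fun j hj => h j (Finset.ne_of_mem_erase hj)

theorem stmt_5_general (L : Fin 4 → Submodule ℂ C4)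
    (hdim : ∀ i, Module.finrank ℂ ↥(L i) = 2) :
    (∃ F : R3, F ≠ 0 ∧ F.IsHomogeneous 8 ∧ ∀ i, F ∈ (lineIdeal (L i)) ^ 3) ∧
    Nat.choose 11 3 = 165 ∧ 4 * 46 = 184 ∧ Nat.choose 11 3 < 4 * 46 := by
  refine ⟨?_, by decide, by norm_num, by decide⟩
  choose Q hQ0 hQ hQL using exists_quadric_mem_lineIdeal_of_ne L hdim
  refine ⟨∏ k, Q k, Finset.prod_ne_zero_iff.mpr fun k _ => hQ0 k, ?_, fun i => ?_⟩
  · simpa using IsHomogeneous.prod Finset.univ Q (fun _ => 2) fun k _ => hQ k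
  · exact Ideal.prod_mem_pow_card_sub_one _ i fun j hj => hQL j i hj.symm

/-- The system `𝓛_8(3,3,3,3)` is nonempty for four pairwise skew lines:
there is a nonzero degree-8 form with multiplicity 3 along each of the four lines,
although `binom(11,3) = 165 < 184 = 4·c_{3,8}` (with `c_{3,8} = 46`), so the
system has negative virtual dimension, hence is special. -/
theorem stmt_5 (L : Fin 4 → Submodule ℂ C4)
    (hdim : ∀ i, Module.finrank ℂ ↥(L i) = 2)
    (hskew : ∀ i j, i ≠ j → L i ⊓ L j = ⊥) :
    (∃ F : R3, F ≠ 0 ∧ F.IsHomogeneous 8 ∧ ∀ i, F ∈ (lineIdeal (L i)) ^ 3) ∧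
    Nat.choose 11 3 = 165 ∧ 4 * 46 = 184 ∧ Nat.choose 11 3 < 4 * 46 :=
  stmt_5_general L hdim
end
end
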